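/- (Lemma 5.2.) Assume [A1], [A2], λ > 0, q > [p]₁, k > 1 and ∫₀^∞ y dF(y) < ∞. Then for every Borel probability measure γ₀ on [0,∞) × ℝ (coordinates (s₁, y₁)) with ∫ |y₁| dγ₀ < ∞, one has ∫ e^{−q s₁} Λ*(y₁) dγ₀(s₁, y₁) = inf_{φ ∈ 𝐅} ∫ e^{−q s₁} φ(y₁) dγ₀(s₁, y₁). -/

import Mathlib

open MeasureTheory Set Real Filter
open scoped ENNReal

noncomputable section

/-- A retention (reinsurance) policy: a Borel measurable function `u` with
`0 ≤ u y ≤ y` for all `y ≥ 0`. -/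
def IsRetention (u : ℝ → ℝ) : Prop :=
  Measurable u ∧ ∀ y : ℝ, 0 ≤ y → 0 ≤ u y ∧ u y ≤ y

/-- The inner supremum `sup_{0 ≤ y ≤ z} |p(y,x) − p(y,x')|` appearing in `[p]₁`. -/
def supDiff (p : ℝ → ℝ → ℝ) (x x' z : ℝ) : ℝ :=
  sSup ((fun y => |p y x - p y x'|) '' Icc 0 z)

/-- Assumption [A1]: `p ≥ 0` and `p` is non-decreasing in each argument on `[0,∞)`. -/
def AssumptionA1 (p : ℝ → ℝ → ℝ) : Prop :=
  (∀ y x : ℝ, 0 ≤ y → 0 ≤ x → 0 ≤ p y x) ∧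
  (∀ x : ℝ, 0 ≤ x → MonotoneOn (fun y => p y x) (Ici 0)) ∧
  (∀ y : ℝ, 0 ≤ y → MonotoneOn (fun x => p y x) (Ici 0))

/-- Assumption [A2], with the real constant `P1` standing for the finite quantity `[p]₁`:
`p` is (jointly) measurable, uniformly continuous on `[0,∞)²`,
`‖p‖₀ = ∫ p(y,0) dF(y)` is finite, and the defining bound of `[p]₁` holds. -/
def AssumptionA2 (F : Measure ℝ) (p : ℝ → ℝ → ℝ) (P1 : ℝ) : Prop :=
  Measurable (fun z : ℝ × ℝ => p z.1 z.2) ∧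
  UniformContinuousOn (fun z : ℝ × ℝ => p z.1 z.2) (Ici 0 ×ˢ Ici 0) ∧
  Integrable (fun y => p y 0) F ∧
  0 ≤ P1 ∧
  (∀ x x' : ℝ, 0 ≤ x → 0 ≤ x' → Integrable (fun z => supDiff p x x' z) F) ∧
  (∀ x x' : ℝ, 0 ≤ x → 0 ≤ x' → (∫ z, supDiff p x x' z ∂F) ≤ P1 * |x - x'|)

/-- The generator `𝓛^u ψ(x) = p^u(x) ψ'(x) + λ ∫ ψ(x − u(y)) dF(y) − (λ+q) ψ(x)`,
where `ψ'` denotes an (a.e.) derivative of `ψ`. -/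
def gen (F : MeasureTheory.Measure ℝ) (p : ℝ → ℝ → ℝ) (lam q : ℝ) (u : ℝ → ℝ)
    (ψ ψ' : ℝ → ℝ) (x : ℝ) : ℝ :=
  (∫ y, p (u y) x ∂F) * ψ' x + lam * (∫ y, ψ (x - u y) ∂F) - (lam + q) * ψ x

/-- The class `𝐅` of dual test functions: `C¹` non-negative functions with `φ' ≤ k` on `ℝ`,
`φ' ≥ 1` on `[0,∞)` and `𝓛^u φ ≤ 0` on `[0,∞)` for every retention policy `u`. -/
def memF (F : MeasureTheory.Measure ℝ) (p : ℝ → ℝ → ℝ) (lam q k : ℝ) (φ : ℝ → ℝ) : Prop :=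
  ContDiff ℝ 1 φ ∧ (∀ x : ℝ, 0 ≤ φ x) ∧ (∀ y : ℝ, deriv φ y ≤ k) ∧
  (∀ y : ℝ, 0 ≤ y → 1 ≤ deriv φ y) ∧
  (∀ u : ℝ → ℝ, IsRetention u → ∀ y : ℝ, 0 ≤ y → gen F p lam q u φ (deriv φ) y ≤ 0)

/-- The dual value `Λ*(x) = inf{φ(x) : φ ∈ 𝐅} ∈ [0,∞]`. -/
def LambdaStar (F : MeasureTheory.Measure ℝ) (p : ℝ → ℝ → ℝ) (lam q k : ℝ) (x : ℝ) : ℝ≥0∞ :=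
  ⨅ (φ : ℝ → ℝ) (_ : memF F p lam q k φ), ENNReal.ofReal (φ x)

/-
`Λ*` is the pointwise infimum of `𝐅`, so only `≥` needs an argument. Absorbing the discount
`e^{−q s₁}` into `γ₀` and projecting onto `y₁` turns both sides into integrals against one finite
measure `ν` on `ℝ`, and the claim becomes an interchange of infimum and integral for `ν`.

Two properties of `𝐅` make the interchange work. It is closed under approximate minima: the soft
minimum `−ε log(e^{−φ₁/ε} + e^{−φ₂/ε}) + δ` of two members is again a member, since its derivative
is a convex combination of theirs and the generator inequality survives up to an error of order
`ε` that the shift `δ` pays for. And its members are continuous, so by Lindelöf the infimum is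
attained along a countable subfamily. Monotone convergence along the running minima of that
subfamily, each approximated from above by a member of `𝐅`, gives the interchange; the explicit
member `a + k log(k − 1 + eʸ)`, of linear growth, makes the first integral finite.
-/

open Topology

section ApproxInf

variable {ι Y : Type*}

def IsApproxInfClosed (s : Set ι) (f : ι → Y → ℝ≥0∞) : Prop :=
  ∀ i ∈ s, ∀ j ∈ s, ∀ δ : NNReal, 0 < δ → ∃ l ∈ s, ∀ y, f l y ≤ min (f i y) (f j y) + δ

theorem IsApproxInfClosed.exists_le_biInf_add {s : Set ι} {f : ι → Y → ℝ≥0∞}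
    (hs : IsApproxInfClosed s f) {Φ : ℕ → ι} (hΦ : ∀ n, Φ n ∈ s) (n : ℕ) :
    ∀ δ : NNReal, 0 < δ → ∃ l ∈ s, ∀ y, f l y ≤ (⨅ k ≤ n, f (Φ k) y) + δ := by
  induction n with
  | zero =>
    intro δ _
    refine ⟨Φ 0, hΦ 0, fun y => ?_⟩
    simp only [Nat.le_zero, iInf_iInf_eq_left]
    exact le_self_add
  | succ n ih =>
    intro δ hδ
    obtain ⟨l, hl, hle⟩ := ih (δ / 2) (half_pos hδ)
    obtain ⟨l', hl', hle'⟩ := hs l hl (Φ (n + 1)) (hΦ _) (δ / 2) (half_pos hδ)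
    refine ⟨l', hl', fun y => ?_⟩
    calc f l' y ≤ min (f l y) (f (Φ (n + 1)) y) + ↑(δ / 2) := hle' y
      _ ≤ min ((⨅ k ≤ n, f (Φ k) y) + ↑(δ / 2)) (f (Φ (n + 1)) y + ↑(δ / 2)) + ↑(δ / 2) := by
          gcongr
          · exact hle y
          · exact le_self_add
      _ = (⨅ k ≤ n + 1, f (Φ k) y) + δ := by
          rw [Nat.iInf_le_succ, min_add_add_right, add_assoc, ← ENNReal.coe_add, add_halves]

end ApproxInf

theorem exists_countable_biInf_eq {ι Y : Type*} [TopologicalSpace Y] [SecondCountableTopology Y]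
    (s : Set ι) (f : ι → Y → ℝ≥0∞) (hf : ∀ i ∈ s, UpperSemicontinuous (f i)) :
    ∃ T ⊆ s, T.Countable ∧ ∀ y, ⨅ i ∈ T, f i y = ⨅ i ∈ s, f i y := by
  have hopen : ∀ r : ℚ, ∀ i ∈ s, IsOpen {y | f i y < Real.toNNReal r} :=
    fun r i hi => (hf i hi).isOpen_preimage _
  choose T hTs hTc hTU using fun r : ℚ => TopologicalSpace.isOpen_biUnion_countable s _ (hopen r)
  refine ⟨⋃ r, T r, iUnion_subset hTs, countable_iUnion hTc, fun y => ?_⟩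
  refine le_antisymm ?_ (biInf_mono (iUnion_subset hTs))
  by_contra! hlt
  obtain ⟨r, -, hsr, hrT⟩ := ENNReal.lt_iff_exists_rat_btwn.1 hlt
  obtain ⟨i, hi, hir⟩ : ∃ i ∈ s, f i y < Real.toNNReal r := by simpa [iInf_lt_iff] using hsr
  have hy : y ∈ ⋃ i ∈ T r, {y | f i y < Real.toNNReal r} := hTU r ▸ mem_biUnion hi hir
  obtain ⟨j, hj, hjr⟩ := mem_iUnion₂.1 hy
  exact ((biInf_le (fun i => f i y) (mem_iUnion.2 ⟨r, hj⟩)).trans_lt (hjr.trans hrT)).false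

theorem Set.Countable.exists_range_eq_insert {ι : Type*} {T : Set ι} (hT : T.Countable)
    (i₀ : ι) :
    ∃ Φ : ℕ → ι, Φ 0 = i₀ ∧ range Φ = insert i₀ T := by
  obtain ⟨e, he⟩ := (hT.insert i₀).exists_eq_range (insert_nonempty i₀ T)
  obtain ⟨n₀, hn₀⟩ : i₀ ∈ range e := he ▸ mem_insert i₀ T
  refine ⟨e ∘ Equiv.swap 0 n₀, by simp [hn₀], ?_⟩
  rw [(Equiv.swap 0 n₀).surjective.range_comp, he]

theorem lintegral_biInf_eq_biInf_lintegral {ι Y : Type*} [TopologicalSpace Y]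
    [SecondCountableTopology Y] [MeasurableSpace Y] [OpensMeasurableSpace Y]
    {ν : Measure Y} [IsFiniteMeasure ν] {s : Set ι} {f : ι → Y → ℝ≥0∞}
    (hf : ∀ i ∈ s, UpperSemicontinuous (f i)) (hs : IsApproxInfClosed s f)
    {i₀ : ι} (hi₀ : i₀ ∈ s) (hfin : ∫⁻ y, f i₀ y ∂ν ≠ ∞) :
    ∫⁻ y, ⨅ i ∈ s, f i y ∂ν = ⨅ i ∈ s, ∫⁻ y, f i y ∂ν := by
  refine le_antisymm (le_iInf₂ fun i hi => lintegral_mono fun y => iInf₂_le i hi) ?_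
  obtain ⟨T, hTs, hTc, hT⟩ := exists_countable_biInf_eq s f hf
  obtain ⟨Φ, hΦ0, hΦT⟩ := hTc.exists_range_eq_insert i₀
  have hΦs : ∀ n, Φ n ∈ s := fun n => insert_subset hi₀ hTs (hΦT ▸ mem_range_self n)
  set g : ℕ → Y → ℝ≥0∞ := fun n y => ⨅ k ≤ n, f (Φ k) y with hg
  have hg_meas : ∀ n, Measurable (g n) := fun n =>
    Measurable.iInf fun k => Measurable.iInf fun _ => (hf _ (hΦs k)).measurable
  have hg_anti : Antitone g := fun m n hmn y => biInf_mono fun k hk => hk.trans hmn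
  have hg0 : g 0 = f i₀ := by
    ext y; simp only [hg, Nat.le_zero, iInf_iInf_eq_left, hΦ0]
  have hg_lim : ∀ y, ⨅ n, g n y ≤ ⨅ i ∈ s, f i y := by
    intro y
    rw [← hT]
    refine le_iInf₂ fun i hi => ?_
    obtain ⟨n, rfl⟩ : i ∈ range Φ := hΦT ▸ mem_insert_of_mem i₀ hi
    exact (iInf_le _ n).trans (iInf₂_le (f := fun k (_ : k ≤ n) => f (Φ k) y) n le_rfl)
  have hg_approx : ∀ n, ⨅ i ∈ s, ∫⁻ y, f i y ∂ν ≤ ∫⁻ y, g n y ∂ν := by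
    intro n
    refine ENNReal.le_of_forall_pos_le_add fun ε hε _ => ?_
    obtain ⟨δ, hδ, hδε⟩ := ENNReal.exists_nnreal_pos_mul_lt (measure_ne_top ν univ)
      (ENNReal.coe_ne_zero.2 hε.ne')
    obtain ⟨l, hl, hle⟩ := hs.exists_le_biInf_add hΦs n δ hδ
    calc ⨅ i ∈ s, ∫⁻ y, f i y ∂ν ≤ ∫⁻ y, f l y ∂ν := iInf₂_le l hl
      _ ≤ ∫⁻ y, g n y + δ ∂ν := lintegral_mono hle
      _ = ∫⁻ y, g n y ∂ν + δ * ν univ := by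
          rw [lintegral_add_right _ measurable_const, lintegral_const]
      _ ≤ ∫⁻ y, g n y ∂ν + ε := by gcongr
  calc ⨅ i ∈ s, ∫⁻ y, f i y ∂ν ≤ ⨅ n, ∫⁻ y, g n y ∂ν := le_iInf hg_approx
    _ = ∫⁻ y, ⨅ n, g n y ∂ν := (lintegral_iInf hg_meas hg_anti (hg0 ▸ hfin)).symm
    _ ≤ ∫⁻ y, ⨅ i ∈ s, f i y ∂ν := lintegral_mono hg_lim

theorem ae_nonneg_of_measure_Iio_zero {F : Measure ℝ} (hF : F (Iio 0) = 0) :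
    ∀ᵐ y ∂F, 0 ≤ y := by
  filter_upwards [measure_eq_zero_iff_ae_notMem.1 hF] with y hy
  simpa using hy

section Premium

variable {F : Measure ℝ} {p : ℝ → ℝ → ℝ} {P1 : ℝ} {u : ℝ → ℝ} {x : ℝ}

theorem sub_le_supDiff (hA1 : AssumptionA1 p) {y : ℝ} (hx : 0 ≤ x) (hy : 0 ≤ y) :
    p y x - p y 0 ≤ supDiff p x 0 y := by
  have hbdd : BddAbove ((fun w => |p w x - p w 0|) '' Icc 0 y) := by
    refine ⟨p y x + p y 0, ?_⟩
    rintro _ ⟨w, ⟨hw0, hwy⟩, rfl⟩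
    have h1 : p w x ≤ p y x := hA1.2.1 x hx hw0 hy hwy
    have h2 : p w 0 ≤ p y 0 := hA1.2.1 0 le_rfl hw0 hy hwy
    have h3 := hA1.1 w x hw0 hx
    have h4 := hA1.1 w 0 hw0 le_rfl
    rw [abs_sub_le_iff]
    constructor <;> linarith
  exact (le_abs_self _).trans (le_csSup hbdd ⟨y, ⟨hy, le_rfl⟩, rfl⟩)

theorem ae_premium_mem_Icc (hF : F (Iio 0) = 0) (hA1 : AssumptionA1 p) (hu : IsRetention u)
    (hx : 0 ≤ x) : ∀ᵐ y ∂F, 0 ≤ p (u y) x ∧ p (u y) x ≤ p y 0 + supDiff p x 0 y := by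
  filter_upwards [ae_nonneg_of_measure_Iio_zero hF] with y hy
  obtain ⟨hu0, huy⟩ := hu.2 y hy
  have hmono : p (u y) x ≤ p y x := hA1.2.1 x hx hu0 hy huy
  exact ⟨hA1.1 _ _ hu0 hx, by linarith [sub_le_supDiff hA1 hx hy]⟩

theorem integrable_premium (hF : F (Iio 0) = 0) (hA1 : AssumptionA1 p)
    (hA2 : AssumptionA2 F p P1) (hu : IsRetention u) (hx : 0 ≤ x) :
    Integrable (fun y => p (u y) x) F := by
  refine Integrable.mono' (hA2.2.2.1.add (hA2.2.2.2.2.1 x 0 hx le_rfl))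
    (hA2.1.comp (hu.1.prodMk measurable_const)).aestronglyMeasurable ?_
  filter_upwards [ae_premium_mem_Icc hF hA1 hu hx] with y hy
  rw [Real.norm_of_nonneg hy.1]
  exact hy.2

theorem integral_premium_nonneg (hF : F (Iio 0) = 0) (hA1 : AssumptionA1 p)
    (hu : IsRetention u) (hx : 0 ≤ x) : 0 ≤ ∫ y, p (u y) x ∂F :=
  integral_nonneg_of_ae <| by
    filter_upwards [ae_premium_mem_Icc hF hA1 hu hx] with y hy using hy.1

theorem integral_premium_le (hF : F (Iio 0) = 0) (hA1 : AssumptionA1 p)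
    (hA2 : AssumptionA2 F p P1) (hu : IsRetention u) (hx : 0 ≤ x) :
    ∫ y, p (u y) x ∂F ≤ ∫ y, p y 0 ∂F + P1 * x := by
  have hsup := hA2.2.2.2.2.2 x 0 hx le_rfl
  rw [sub_zero, abs_of_nonneg hx] at hsup
  calc ∫ y, p (u y) x ∂F ≤ ∫ y, p y 0 + supDiff p x 0 y ∂F :=
        integral_mono_ae (integrable_premium hF hA1 hA2 hu hx)
          (hA2.2.2.1.add (hA2.2.2.2.2.1 x 0 hx le_rfl))
          (by filter_upwards [ae_premium_mem_Icc hF hA1 hu hx] with y hy using hy.2)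
    _ = ∫ y, p y 0 ∂F + ∫ y, supDiff p x 0 y ∂F :=
        integral_add hA2.2.2.1 (hA2.2.2.2.2.1 x 0 hx le_rfl)
    _ ≤ ∫ y, p y 0 ∂F + P1 * x := by linarith

theorem gen_nonpos_of_linear_le [IsProbabilityMeasure F] (hF : F (Iio 0) = 0)
    (hA1 : AssumptionA1 p) (hA2 : AssumptionA2 F p P1) {lam q k : ℝ} (hlam : 0 ≤ lam)
    (hq : P1 ≤ q) (hq0 : 0 < q) {ψ ψ' : ℝ → ℝ} (hψ0 : ∀ z, 0 ≤ ψ z) (hψ : Monotone ψ)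
    (hd0 : 0 ≤ ψ' x) (hdk : ψ' x ≤ k) (hlin : k * (∫ y, p y 0 ∂F) / q + k * x ≤ ψ x)
    (hu : IsRetention u) (hx : 0 ≤ x) : gen F p lam q u ψ ψ' x ≤ 0 := by
  have hP0 := integral_premium_nonneg hF hA1 hu hx
  have hPle := integral_premium_le hF hA1 hA2 hu hx
  have hjump : ∫ y, ψ (x - u y) ∂F ≤ ψ x := by
    refine (integral_mono_of_nonneg (ae_of_all _ fun y => hψ0 _) (integrable_const (ψ x))
      ?_).trans_eq (by simp)
    filter_upwards [ae_nonneg_of_measure_Iio_zero hF] with y hy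
    exact hψ (by linarith [(hu.2 y hy).1])
  have hk0 : 0 ≤ k := hd0.trans hdk
  have hqlin : k * (∫ y, p y 0 ∂F) + q * (k * x) ≤ q * ψ x := by
    have := mul_le_mul_of_nonneg_left hlin hq0.le
    rwa [mul_add, mul_div_cancel₀ _ hq0.ne'] at this
  have hdrift : (∫ y, p (u y) x ∂F) * ψ' x ≤ (∫ y, p y 0 ∂F + P1 * x) * k :=
    mul_le_mul hPle hdk hd0 (hP0.trans hPle)
  have hslack : 0 ≤ k * x * (q - P1) := mul_nonneg (mul_nonneg hk0 hx) (sub_nonneg.2 hq)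
  unfold gen
  nlinarith [mul_le_mul_of_nonneg_left hjump hlam]

end Premium

section Barrier

variable {a k : ℝ}

def logExpBarrier (a k x : ℝ) : ℝ := a + k * Real.log (k - 1 + Real.exp x)

theorem logExpBarrier_arg_pos (hk : 1 < k) (x : ℝ) : 0 < k - 1 + Real.exp x := by
  linarith [Real.exp_pos x]

theorem hasDerivAt_logExpBarrier (hk : 1 < k) (x : ℝ) :
    HasDerivAt (logExpBarrier a k) (k * (Real.exp x / (k - 1 + Real.exp x))) x :=
  (((Real.hasDerivAt_exp x).const_add (k - 1)).log (logExpBarrier_arg_pos hk x).ne').const_mul k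
    |>.const_add a

theorem contDiff_logExpBarrier (hk : 1 < k) : ContDiff ℝ 1 (logExpBarrier a k) :=
  contDiff_const.add <| contDiff_const.mul <|
    (contDiff_const.add Real.contDiff_exp).log fun x => (logExpBarrier_arg_pos hk x).ne'

theorem deriv_logExpBarrier_nonneg (hk : 1 < k) (x : ℝ) : 0 ≤ deriv (logExpBarrier a k) x := by
  rw [(hasDerivAt_logExpBarrier hk x).deriv]
  have := logExpBarrier_arg_pos hk x
  positivity

theorem deriv_logExpBarrier_le (hk : 1 < k) (x : ℝ) : deriv (logExpBarrier a k) x ≤ k := by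
  rw [(hasDerivAt_logExpBarrier hk x).deriv]
  have hfrac : Real.exp x / (k - 1 + Real.exp x) ≤ 1 :=
    (div_le_one (logExpBarrier_arg_pos hk x)).2 (by linarith)
  nlinarith

theorem one_le_deriv_logExpBarrier (hk : 1 < k) {x : ℝ} (hx : 0 ≤ x) :
    1 ≤ deriv (logExpBarrier a k) x := by
  rw [(hasDerivAt_logExpBarrier hk x).deriv, ← mul_div_assoc,
    le_div_iff₀ (logExpBarrier_arg_pos hk x), one_mul]
  nlinarith [Real.one_le_exp hx]

theorem logExpBarrier_ge_linear (hk : 1 < k) (x : ℝ) : a + k * x ≤ logExpBarrier a k x := by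
  have : x ≤ Real.log (k - 1 + Real.exp x) := by
    rw [Real.le_log_iff_exp_le (logExpBarrier_arg_pos hk x)]
    linarith
  unfold logExpBarrier
  nlinarith

theorem logExpBarrier_ge (hk : 1 < k) (x : ℝ) :
    a - k * |Real.log (k - 1)| ≤ logExpBarrier a k x := by
  have : Real.log (k - 1) ≤ Real.log (k - 1 + Real.exp x) :=
    Real.log_le_log (by linarith) (by linarith [Real.exp_pos x])
  unfold logExpBarrier
  nlinarith [neg_abs_le (Real.log (k - 1))]

theorem logExpBarrier_le (hk : 1 < k) (x : ℝ) :
    logExpBarrier a k x ≤ a + k * Real.log k + k * |x| := by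
  have hbound : k - 1 + Real.exp x ≤ k * Real.exp |x| := by
    have := Real.one_le_exp (abs_nonneg x)
    nlinarith [Real.exp_le_exp.2 (le_abs_self x)]
  have : Real.log (k - 1 + Real.exp x) ≤ Real.log k + |x| := by
    calc Real.log (k - 1 + Real.exp x) ≤ Real.log (k * Real.exp |x|) :=
          Real.log_le_log (logExpBarrier_arg_pos hk x) hbound
      _ = Real.log k + |x| := by
          rw [Real.log_mul (by positivity) (Real.exp_pos _).ne', Real.log_exp]
  unfold logExpBarrier
  nlinarith

end Barrier

theorem exists_memF_le_linear {F : Measure ℝ} [IsProbabilityMeasure F] {p : ℝ → ℝ → ℝ}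
    {P1 lam q k : ℝ} (hF : F (Iio 0) = 0) (hA1 : AssumptionA1 p) (hA2 : AssumptionA2 F p P1)
    (hlam : 0 < lam) (hq : P1 < q) (hk : 1 < k) :
    ∃ ψ, memF F p lam q k ψ ∧ ∃ C, ∀ y, ψ y ≤ C + k * |y| := by
  have hq0 : 0 < q := hA2.2.2.2.1.trans_lt hq
  have hk0 : 0 < k := one_pos.trans hk
  have hp0 : 0 ≤ ∫ y, p y 0 ∂F := integral_nonneg_of_ae <| by
    filter_upwards [ae_nonneg_of_measure_Iio_zero hF] with y hy using hA1.1 y 0 hy le_rfl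
  set a := k * (∫ y, p y 0 ∂F) / q + k * |Real.log (k - 1)|
  have hψ0 : ∀ x, 0 ≤ logExpBarrier a k x := fun x => by
    have := logExpBarrier_ge (a := a) hk x
    have : 0 ≤ k * (∫ y, p y 0 ∂F) / q := by positivity
    linarith
  have hmono : Monotone (logExpBarrier a k) :=
    monotone_of_deriv_nonneg (contDiff_logExpBarrier hk).differentiable_one
      (deriv_logExpBarrier_nonneg hk)
  refine ⟨logExpBarrier a k, ⟨contDiff_logExpBarrier hk, hψ0, deriv_logExpBarrier_le hk,
    fun y hy => one_le_deriv_logExpBarrier hk hy, fun u hu x hx => ?_⟩,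
    a + k * Real.log k, logExpBarrier_le hk⟩
  refine gen_nonpos_of_linear_le hF hA1 hA2 hlam.le hq.le hq0 hψ0 hmono
    (deriv_logExpBarrier_nonneg hk x) (deriv_logExpBarrier_le hk x) ?_ hu hx
  have := logExpBarrier_ge_linear (a := a) hk x
  have : 0 ≤ k * |Real.log (k - 1)| := by positivity
  linarith

theorem IsRetention.min_const {u : ℝ → ℝ} (hu : IsRetention u) {c : ℝ} (hc : 0 ≤ c) :
    IsRetention fun y => min (u y) c :=
  ⟨hu.1.min measurable_const, fun y hy =>
    ⟨le_min (hu.2 y hy).1 hc, (min_le_left _ _).trans (hu.2 y hy).2⟩⟩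

section DualClass

variable {F : Measure ℝ} {p : ℝ → ℝ → ℝ} {lam q k : ℝ} {u : ℝ → ℝ} {x : ℝ} {φ : ℝ → ℝ}

theorem memF.lam_integral_le (hF : F (Iio 0) = 0) (hA1 : AssumptionA1 p)
    (hφ : memF F p lam q k φ) (hu : IsRetention u) (hx : 0 ≤ x) :
    lam * ∫ y, φ (x - u y) ∂F ≤ (lam + q) * φ x := by
  have hgen := hφ.2.2.2.2 u hu x hx
  have hdrift : 0 ≤ (∫ y, p (u y) x ∂F) * deriv φ x :=
    mul_nonneg (integral_premium_nonneg hF hA1 hu hx) (zero_le_one.trans (hφ.2.2.2.1 x hx))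
  unfold gen at hgen
  linarith

theorem memF.integrable_comp_sub [IsFiniteMeasure F] (hF : F (Iio 0) = 0)
    (hA1 : AssumptionA1 p) (hlam : 0 < lam) (hφ : memF F p lam q k φ) (hu : IsRetention u)
    (hx : 0 ≤ x) : Integrable (fun y => φ (x - u y)) F := by
  have hcont : Continuous φ := hφ.1.continuous
  have hmeas : ∀ {v : ℝ → ℝ}, IsRetention v → Measurable fun y => φ (x - v y) :=
    fun hv => hcont.measurable.comp (measurable_const.sub hv.1)
  -- truncated retentions give integrable jump terms bounded by the generator inequality
  -- uniformly in `n`; Fatou's lemma passes the bound to `u`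
  set v : ℕ → ℝ → ℝ := fun n y => min (u y) n
  have hv : ∀ n, IsRetention (v n) := fun n => hu.min_const n.cast_nonneg
  have hv_int : ∀ n : ℕ, Integrable (fun y => φ (x - v n y)) F := by
    intro n
    obtain ⟨B, hB⟩ := (isCompact_Icc (a := x - n) (b := x)).exists_bound_of_continuousOn
      hcont.continuousOn
    refine Integrable.mono' (integrable_const B) (hmeas (hv n)).aestronglyMeasurable ?_
    filter_upwards [ae_nonneg_of_measure_Iio_zero hF] with y hy
    exact hB _ ⟨by linarith [min_le_right (u y) n], by linarith [((hv n).2 y hy).1]⟩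
  have hv_lim : ∀ y, Tendsto (fun n => ENNReal.ofReal (φ (x - v n y))) atTop
      (𝓝 (ENNReal.ofReal (φ (x - u y)))) := fun y =>
    tendsto_const_nhds.congr' <| by
      filter_upwards [eventually_ge_atTop ⌈u y⌉₊] with n hn
      show ENNReal.ofReal (φ (x - u y)) = ENNReal.ofReal (φ (x - min (u y) n))
      rw [min_eq_left ((Nat.le_ceil _).trans (Nat.cast_le.2 hn))]
  have hbound : ∫⁻ y, ENNReal.ofReal (φ (x - u y)) ∂F
      ≤ ENNReal.ofReal ((lam + q) * φ x / lam) := by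
    calc ∫⁻ y, ENNReal.ofReal (φ (x - u y)) ∂F
        = ∫⁻ y, liminf (fun n => ENNReal.ofReal (φ (x - v n y))) atTop ∂F :=
          lintegral_congr fun y => (hv_lim y).liminf_eq.symm
      _ ≤ liminf (fun n => ∫⁻ y, ENNReal.ofReal (φ (x - v n y)) ∂F) atTop :=
          lintegral_liminf_le fun n => (hmeas (hv n)).ennreal_ofReal
      _ ≤ ENNReal.ofReal ((lam + q) * φ x / lam) := by
          refine liminf_le_of_frequently_le' (Frequently.of_forall fun n => ?_)
          rw [← ofReal_integral_eq_lintegral_ofReal (hv_int n) (ae_of_all _ fun y => hφ.2.1 _)]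
          refine ENNReal.ofReal_le_ofReal ((le_div_iff₀' hlam).2 ?_)
          exact hφ.lam_integral_le hF hA1 (hv n) hx
  refine ⟨(hmeas hu).aestronglyMeasurable, ?_⟩
  rw [hasFiniteIntegral_iff_ofReal (ae_of_all _ fun y => hφ.2.1 _)]
  exact hbound.trans_lt ENNReal.ofReal_lt_top

end DualClass

section Softmin

variable {ε a b : ℝ}

def softmin (ε a b : ℝ) : ℝ := -(ε * Real.log (Real.exp (-(a / ε)) + Real.exp (-(b / ε))))

def softminWeight (ε a b : ℝ) : ℝ :=
  Real.exp (-(a / ε)) / (Real.exp (-(a / ε)) + Real.exp (-(b / ε)))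

theorem softmin_comm (ε a b : ℝ) : softmin ε a b = softmin ε b a := by
  rw [softmin, softmin, add_comm]

theorem softmin_le_left (hε : 0 < ε) : softmin ε a b ≤ a := by
  have hlog : -(a / ε) ≤ Real.log (Real.exp (-(a / ε)) + Real.exp (-(b / ε))) := by
    rw [Real.le_log_iff_exp_le (by positivity)]
    linarith [Real.exp_pos (-(b / ε))]
  have := mul_le_mul_of_nonneg_left hlog hε.le
  rw [mul_neg, mul_div_cancel₀ _ hε.ne'] at this
  rw [softmin]
  linarith

theorem softmin_le_right (hε : 0 < ε) : softmin ε a b ≤ b :=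
  softmin_comm ε a b ▸ softmin_le_left hε

theorem min_sub_le_softmin (hε : 0 < ε) : min a b - ε ≤ softmin ε a b := by
  have ha : Real.exp (-(a / ε)) ≤ Real.exp (-(min a b / ε)) := by gcongr; exact min_le_left _ _
  have hb : Real.exp (-(b / ε)) ≤ Real.exp (-(min a b / ε)) := by gcongr; exact min_le_right _ _
  have hlog : Real.log (Real.exp (-(a / ε)) + Real.exp (-(b / ε))) ≤ 1 + -(min a b / ε) := by
    calc Real.log (Real.exp (-(a / ε)) + Real.exp (-(b / ε)))
        ≤ Real.log (2 * Real.exp (-(min a b / ε))) :=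
          Real.log_le_log (by positivity) (by linarith)
      _ = Real.log 2 + -(min a b / ε) := by
          rw [Real.log_mul two_ne_zero (Real.exp_pos _).ne', Real.log_exp]
      _ ≤ 1 + -(min a b / ε) := by linarith [Real.log_two_lt_d9]
  have := mul_le_mul_of_nonneg_left hlog hε.le
  rw [mul_add, mul_neg, mul_div_cancel₀ _ hε.ne'] at this
  rw [softmin]
  linarith

theorem softminWeight_nonneg : 0 ≤ softminWeight ε a b := by
  unfold softminWeight; positivity

theorem softminWeight_add_swap : softminWeight ε a b + softminWeight ε b a = 1 := by
  rw [softminWeight, softminWeight, add_comm (Real.exp (-(b / ε))), ← add_div,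
    div_self (by positivity)]

theorem mul_exp_neg_div_le (hε : 0 < ε) (t : ℝ) : t * Real.exp (-(t / ε)) ≤ ε := by
  have h : t ≤ ε * Real.exp (t / ε) := by
    have := mul_le_mul_of_nonneg_left (Real.add_one_le_exp (t / ε)) hε.le
    rw [mul_add, mul_div_cancel₀ _ hε.ne'] at this
    linarith
  calc t * Real.exp (-(t / ε)) ≤ ε * Real.exp (t / ε) * Real.exp (-(t / ε)) := by gcongr
    _ = ε := by rw [mul_assoc, ← Real.exp_add, add_neg_cancel, Real.exp_zero, mul_one]

theorem softminWeight_mul_add_le_of_le (hε : 0 < ε) (hab : a ≤ b) :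
    softminWeight ε a b * a + softminWeight ε b a * b ≤ a + ε := by
  have hw : softminWeight ε b a ≤ Real.exp (-((b - a) / ε)) := by
    rw [softminWeight, div_le_iff₀ (by positivity), mul_add, ← Real.exp_add, ← Real.exp_add]
    have : -((b - a) / ε) + -(a / ε) = -(b / ε) := by ring
    rw [this]
    linarith [Real.exp_pos (-((b - a) / ε) + -(b / ε))]
  have hsum := softminWeight_add_swap (ε := ε) (a := a) (b := b)
  calc softminWeight ε a b * a + softminWeight ε b a * b
      = a + softminWeight ε b a * (b - a) := by linear_combination a * hsum
    _ ≤ a + Real.exp (-((b - a) / ε)) * (b - a) := by gcongr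
    _ ≤ a + ε := by linarith [mul_exp_neg_div_le hε (b - a)]

theorem softminWeight_mul_add_le (hε : 0 < ε) :
    softminWeight ε a b * a + softminWeight ε b a * b ≤ min a b + ε := by
  rcases le_total a b with hab | hba
  · rw [min_eq_left hab]; exact softminWeight_mul_add_le_of_le hε hab
  · rw [min_eq_right hba, add_comm (softminWeight ε a b * a)]
    exact softminWeight_mul_add_le_of_le hε hba

theorem HasDerivAt.softmin {f g : ℝ → ℝ} {f' g' z : ℝ} (hf : HasDerivAt f f' z)
    (hg : HasDerivAt g g' z) (hε : 0 < ε) :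
    HasDerivAt (fun z => softmin ε (f z) (g z))
      (softminWeight ε (f z) (g z) * f' + softminWeight ε (g z) (f z) * g') z := by
  have hE : 0 < Real.exp (-(f z / ε)) + Real.exp (-(g z / ε)) := by positivity
  have h := (((hf.div_const ε).fun_neg.exp.fun_add (hg.div_const ε).fun_neg.exp).log
    hE.ne').const_mul ε |>.fun_neg
  refine h.congr_deriv ?_
  rw [softminWeight, softminWeight, add_comm (Real.exp (-(g z / ε)))]
  field_simp
  ring

theorem ContDiff.softmin {n : WithTop ℕ∞} {f g : ℝ → ℝ} (hf : ContDiff ℝ n f)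
    (hg : ContDiff ℝ n g) : ContDiff ℝ n fun z => softmin ε (f z) (g z) :=
  (contDiff_const.mul <| ((hf.div_const ε).neg.exp.add (hg.div_const ε).neg.exp).log
    fun _ => by positivity).neg

end Softmin

section Closure

variable {F : Measure ℝ} {p : ℝ → ℝ → ℝ} {lam q k : ℝ} {u : ℝ → ℝ} {x : ℝ}

theorem gen_le_convexComb [IsProbabilityMeasure F] {ψ ψ' φ₁ φ₁' φ₂ φ₂' : ℝ → ℝ}
    {t₁ t₂ δ η : ℝ} (ht₁ : 0 ≤ t₁) (ht₂ : 0 ≤ t₂) (ht : t₁ + t₂ = 1) (hlam : 0 ≤ lam)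
    (hlq : 0 ≤ lam + q) (hψ' : ψ' x = t₁ * φ₁' x + t₂ * φ₂' x) (hψ0 : ∀ z, 0 ≤ ψ z)
    (hψ₁ : ∀ z, ψ z ≤ φ₁ z + δ) (hψ₂ : ∀ z, ψ z ≤ φ₂ z + δ)
    (hψx : t₁ * φ₁ x + t₂ * φ₂ x + δ - η ≤ ψ x)
    (hi₁ : Integrable (fun y => φ₁ (x - u y)) F) (hi₂ : Integrable (fun y => φ₂ (x - u y)) F) :
    gen F p lam q u ψ ψ' x ≤
      t₁ * gen F p lam q u φ₁ φ₁' x + t₂ * gen F p lam q u φ₂ φ₂' x - q * δ + (lam + q) * η := by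
  have hcomb : ∀ z, ψ z ≤ t₁ * φ₁ z + t₂ * φ₂ z + δ := fun z => by
    linear_combination t₁ * hψ₁ z + t₂ * hψ₂ z + (δ - ψ z) * ht
  have hjump : ∫ y, ψ (x - u y) ∂F ≤
      t₁ * ∫ y, φ₁ (x - u y) ∂F + t₂ * ∫ y, φ₂ (x - u y) ∂F + δ := by
    have hint : Integrable (fun y => t₁ * φ₁ (x - u y) + t₂ * φ₂ (x - u y)) F :=
      (hi₁.const_mul t₁).add (hi₂.const_mul t₂)
    calc ∫ y, ψ (x - u y) ∂F ≤ ∫ y, t₁ * φ₁ (x - u y) + t₂ * φ₂ (x - u y) + δ ∂F :=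
          integral_mono_of_nonneg (ae_of_all _ fun y => hψ0 _) (hint.add (integrable_const δ))
            (ae_of_all _ fun y => hcomb _)
      _ = t₁ * ∫ y, φ₁ (x - u y) ∂F + t₂ * ∫ y, φ₂ (x - u y) ∂F + δ := by
          rw [integral_add hint (integrable_const δ), integral_add (hi₁.const_mul t₁)
            (hi₂.const_mul t₂), integral_const_mul, integral_const_mul, integral_const,
            probReal_univ, one_smul]
  unfold gen
  rw [hψ']
  nlinarith [mul_le_mul_of_nonneg_left hjump hlam, mul_le_mul_of_nonneg_left hψx hlq]

theorem memF.exists_le_min_add [IsProbabilityMeasure F] (hF : F (Iio 0) = 0)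
    (hA1 : AssumptionA1 p) (hlam : 0 < lam) (hq : 0 < q) {φ₁ φ₂ : ℝ → ℝ}
    (h₁ : memF F p lam q k φ₁) (h₂ : memF F p lam q k φ₂) {δ : ℝ} (hδ : 0 < δ) :
    ∃ ψ, memF F p lam q k ψ ∧ ∀ z, ψ z ≤ min (φ₁ z) (φ₂ z) + δ := by
  -- the smoothing error `2ε` in the value at `x` costs `(lam + q) * 2ε`, which `q * δ` pays for
  obtain ⟨ε, hε, hqδ⟩ : ∃ ε, 0 < ε ∧ q * δ = (lam + q) * (2 * ε) :=
    ⟨q * δ / (2 * (lam + q)), by positivity, by field_simp⟩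
  have hεδ : ε ≤ δ := by nlinarith
  set ψ := fun z => softmin ε (φ₁ z) (φ₂ z) + δ
  set t₁ := fun z => softminWeight ε (φ₁ z) (φ₂ z)
  set t₂ := fun z => softminWeight ε (φ₂ z) (φ₁ z)
  have hderiv : ∀ z, deriv ψ z = t₁ z * deriv φ₁ z + t₂ z * deriv φ₂ z := fun z =>
    (((h₁.1.differentiable one_ne_zero z).hasDerivAt.softmin
      (h₂.1.differentiable one_ne_zero z).hasDerivAt hε).add_const δ).deriv
  have hψ₁ : ∀ z, ψ z ≤ φ₁ z + δ := fun z => by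
    simp only [ψ]; linarith [softmin_le_left (a := φ₁ z) (b := φ₂ z) hε]
  have hψ₂ : ∀ z, ψ z ≤ φ₂ z + δ := fun z => by
    simp only [ψ]; linarith [softmin_le_right (a := φ₁ z) (b := φ₂ z) hε]
  have hψ_ge : ∀ z, min (φ₁ z) (φ₂ z) - ε + δ ≤ ψ z := fun z => by
    simp only [ψ]; linarith [min_sub_le_softmin (a := φ₁ z) (b := φ₂ z) hε]
  have hψ0 : ∀ z, 0 ≤ ψ z := fun z => by
    linarith [hψ_ge z, le_min (h₁.2.1 z) (h₂.2.1 z)]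
  have ht : ∀ z, t₁ z + t₂ z = 1 := fun z => softminWeight_add_swap
  have ht₁ : ∀ z, 0 ≤ t₁ z := fun z => softminWeight_nonneg
  have ht₂ : ∀ z, 0 ≤ t₂ z := fun z => softminWeight_nonneg
  refine ⟨ψ, ⟨h₁.1.softmin h₂.1 |>.add contDiff_const, hψ0, fun z => ?_, fun z hz => ?_,
    fun u hu x hx => ?_⟩, fun z => ?_⟩
  · rw [hderiv]
    linear_combination mul_le_mul_of_nonneg_left (h₁.2.2.1 z) (ht₁ z) +
      mul_le_mul_of_nonneg_left (h₂.2.2.1 z) (ht₂ z) + k * ht z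
  · rw [hderiv]
    linear_combination mul_le_mul_of_nonneg_left (h₁.2.2.2.1 z hz) (ht₁ z) +
      mul_le_mul_of_nonneg_left (h₂.2.2.2.1 z hz) (ht₂ z) - ht z
  · have hψx : t₁ x * φ₁ x + t₂ x * φ₂ x + δ - 2 * ε ≤ ψ x := by
      linarith [hψ_ge x, softminWeight_mul_add_le (a := φ₁ x) (b := φ₂ x) hε]
    have hgen := gen_le_convexComb (F := F) (p := p) (q := q) (ht₁ x) (ht₂ x) (ht x) hlam.le
      (by linarith) (hderiv x) hψ0
      hψ₁ hψ₂ hψx (h₁.integrable_comp_sub hF hA1 hlam hu hx)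
      (h₂.integrable_comp_sub hF hA1 hlam hu hx)
    linear_combination hgen + mul_nonpos_of_nonneg_of_nonpos (ht₁ x) (h₁.2.2.2.2 u hu x hx) +
      mul_nonpos_of_nonneg_of_nonpos (ht₂ x) (h₂.2.2.2.2 u hu x hx) - hqδ
  · rcases min_choice (φ₁ z) (φ₂ z) with h | h <;> rw [h]
    exacts [hψ₁ z, hψ₂ z]

end Closure

theorem isApproxInfClosed_memF {F : Measure ℝ} [IsProbabilityMeasure F] {p : ℝ → ℝ → ℝ}
    {lam q k : ℝ} (hF : F (Iio 0) = 0) (hA1 : AssumptionA1 p) (hlam : 0 < lam) (hq : 0 < q) :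
    IsApproxInfClosed {φ | memF F p lam q k φ} fun φ y => ENNReal.ofReal (φ y) := by
  intro φ₁ h₁ φ₂ h₂ δ hδ
  obtain ⟨ψ, hψ, hle⟩ := memF.exists_le_min_add hF hA1 hlam hq h₁ h₂ (NNReal.coe_pos.2 hδ)
  refine ⟨ψ, hψ, fun y => (ENNReal.ofReal_le_ofReal (hle y)).trans_eq ?_⟩
  rw [ENNReal.ofReal_add (le_min (h₁.2.1 y) (h₂.2.1 y)) δ.coe_nonneg, ENNReal.ofReal_min,
    ENNReal.ofReal_coe_nnreal]

section DiscountedMarginal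

variable {γ : Measure (ℝ × ℝ)} {q : ℝ}

def discountedMarginal (γ : Measure (ℝ × ℝ)) (q : ℝ) : Measure ℝ :=
  (γ.withDensity fun z => ENNReal.ofReal (Real.exp (-q * z.1))).map Prod.snd

theorem lintegral_discountedMarginal {g : ℝ → ℝ≥0∞} (hg : Measurable g) :
    ∫⁻ y, g y ∂discountedMarginal γ q =
      ∫⁻ z, ENNReal.ofReal (Real.exp (-q * z.1)) * g z.2 ∂γ := by
  rw [discountedMarginal, lintegral_map hg measurable_snd]
  exact lintegral_withDensity_eq_lintegral_mul _ (by fun_prop) (hg.comp measurable_snd)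

theorem ae_ofReal_exp_le_one (hq : 0 ≤ q) (hγ : ∀ᵐ z ∂γ, 0 ≤ z.1) :
    ∀ᵐ z ∂γ, ENNReal.ofReal (Real.exp (-q * z.1)) ≤ 1 := by
  filter_upwards [hγ] with z hz
  exact ENNReal.ofReal_le_one.2 (Real.exp_le_one_iff.2 (by nlinarith))

theorem isFiniteMeasure_discountedMarginal [IsFiniteMeasure γ] (hq : 0 ≤ q)
    (hγ : ∀ᵐ z ∂γ, 0 ≤ z.1) : IsFiniteMeasure (discountedMarginal γ q) := by
  have := isFiniteMeasure_withDensity (μ := γ) <|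
    ((lintegral_mono_ae (ae_ofReal_exp_le_one hq hγ)).trans_lt (by simp)).ne
  unfold discountedMarginal
  infer_instance

theorem lintegral_discountedMarginal_ne_top [IsFiniteMeasure γ] (hq : 0 ≤ q)
    (hγ : ∀ᵐ z ∂γ, 0 ≤ z.1) (hy : Integrable (fun z : ℝ × ℝ => z.2) γ) {ψ : ℝ → ℝ}
    (hψ : Continuous ψ) {C k : ℝ} (hψC : ∀ y, ψ y ≤ C + k * |y|) :
    ∫⁻ y, ENNReal.ofReal (ψ y) ∂discountedMarginal γ q ≠ ∞ := by
  rw [lintegral_discountedMarginal hψ.measurable.ennreal_ofReal]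
  refine (lt_of_le_of_lt (lintegral_mono_ae ?_)
    ((integrable_const C).add (hy.abs.const_mul k)).lintegral_lt_top).ne
  filter_upwards [ae_ofReal_exp_le_one hq hγ] with z hz
  exact (mul_le_of_le_one_left' hz).trans (ENNReal.ofReal_le_ofReal (hψC z.2))

end DiscountedMarginal

theorem inf_exchange_dual_general
    (F : Measure ℝ) [IsProbabilityMeasure F] (hF : F (Iio 0) = 0)
    (p : ℝ → ℝ → ℝ) (P1 : ℝ) (hA1 : AssumptionA1 p) (hA2 : AssumptionA2 F p P1)
    (lam q k : ℝ) (hlam : 0 < lam) (hq : P1 < q) (hk : 1 < k)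
    (γ0 : Measure (ℝ × ℝ)) [IsProbabilityMeasure γ0]
    (hγ0s : ∀ᵐ z ∂γ0, 0 ≤ z.1)
    (hy1 : Integrable (fun z : ℝ × ℝ => z.2) γ0) :
    (∫⁻ z, ENNReal.ofReal (Real.exp (-q * z.1)) * LambdaStar F p lam q k z.2 ∂γ0)
      = ⨅ (φ : ℝ → ℝ) (_ : memF F p lam q k φ),
          ∫⁻ z, ENNReal.ofReal (Real.exp (-q * z.1) * φ z.2) ∂γ0 := by
  have hq0 : 0 < q := hA2.2.2.2.1.trans_lt hq
  have := isFiniteMeasure_discountedMarginal hq0.le hγ0s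
  obtain ⟨ψ, hψ, C, hψC⟩ := exists_memF_le_linear hF hA1 hA2 hlam hq hk
  have hcont : ∀ φ ∈ {φ | memF F p lam q k φ},
      UpperSemicontinuous fun y => ENNReal.ofReal (φ y) :=
    fun φ hφ => (ENNReal.continuous_ofReal.comp hφ.1.continuous).upperSemicontinuous
  have key := lintegral_biInf_eq_biInf_lintegral hcont (isApproxInfClosed_memF hF hA1 hlam hq0)
    hψ (lintegral_discountedMarginal_ne_top hq0.le hγ0s hy1 hψ.1.continuous hψC)
  rw [lintegral_discountedMarginal (upperSemicontinuous_biInf hcont).measurable] at key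
  refine key.trans (iInf_congr fun φ => iInf_congr fun hφ => ?_)
  rw [lintegral_discountedMarginal hφ.1.continuous.measurable.ennreal_ofReal]
  simp_rw [ENNReal.ofReal_mul (Real.exp_pos _).le]

/-- Lemma 5.2.  For every probability measure `γ₀` on `[0,∞) × ℝ` with
integrable second marginal, `∫ e^{−q s₁} Λ*(y₁) dγ₀ = inf_{φ ∈ 𝐅} ∫ e^{−q s₁} φ(y₁) dγ₀`. -/
theorem inf_exchange_dual
    (F : Measure ℝ) [IsProbabilityMeasure F] (hF : F (Iio 0) = 0)
    (hmean : Integrable (fun y : ℝ => y) F)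
    (p : ℝ → ℝ → ℝ) (P1 : ℝ) (hA1 : AssumptionA1 p) (hA2 : AssumptionA2 F p P1)
    (lam q k : ℝ) (hlam : 0 < lam) (hq : P1 < q) (hk : 1 < k)
    (γ0 : Measure (ℝ × ℝ)) [IsProbabilityMeasure γ0]
    (hγ0s : ∀ᵐ z ∂γ0, 0 ≤ z.1)
    (hy1 : Integrable (fun z : ℝ × ℝ => z.2) γ0) :
    (∫⁻ z, ENNReal.ofReal (Real.exp (-q * z.1)) * LambdaStar F p lam q k z.2 ∂γ0)
      = ⨅ (φ : ℝ → ℝ) (_ : memF F p lam q k φ),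
          ∫⁻ z, ENNReal.ofReal (Real.exp (-q * z.1) * φ z.2) ∂γ0 :=
  inf_exchange_dual_general F hF p P1 hA1 hA2 lam q k hlam hq hk γ0 hγ0s hy1
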